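/- Let V be a finite type and E a DAG on V. Let X, Y be distinct vertices and Z ⊆ V \ {X, Y} a set such that Z satisfies the adjustment criterion relative to ({X}, {Y}) and X is not an ancestor of any vertex of Z. Let Z ∈ Z, and let q be a path from Z to Y that is open given (Z \ {Z}) ∪ {X} and has the fewest colliders among all paths from Z to Y that are open given (Z \ {Z}) ∪ {X}. Then q is open given Z \ {Z}. -/

import Mathlib

/-!
Suppose some collider of `q` has no descendant in `Z \ {z₀}` and let `i₀` be the last one. Its
descendant in `(Z \ {z₀}) ∪ {X}` must be `X`. If `q i₀ = X`, the part of `q` after `i₀` already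
contradicts the adjustment criterion (see the last paragraph); otherwise take a causal path `c`
from `q i₀` to `X`.

If `c` meets `q` again, replace the stretch of `q` between `i₀` and the first meeting point by `c`.
The result is still open given `(Z \ {z₀}) ∪ {X}` and has lost the collider at `i₀`; a new collider
can only appear at the meeting point, and then acyclicity forces a collider of `q` strictly inside
the replaced stretch. So the number of colliders drops, contradicting minimality.

Otherwise `c` reversed, followed by the part of `q` after `i₀`, is a non-causal path from `X` to
`Y`; its vertices on `c` descend from `q i₀`, and the colliders after `i₀` have descendants in
`Z \ {z₀}` by the choice of `i₀`, so it is open given `Z`, against the adjustment criterion.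
-/

open scoped Classical

variable {V : Type*}

/-- `a` is an ancestor of `b` (every vertex is its own ancestor). -/
def Anc (E : V → V → Prop) (a b : V) : Prop := Relation.ReflTransGen E a b

/-- A path in a directed graph `E` from `a` to `b`: a sequence of distinct vertices
`a = vtx 0, …, vtx len = b` (`len ≥ 1`) in which consecutive vertices are joined
by an edge of `E` in either direction. -/
structure GPath (E : V → V → Prop) (a b : V) where
  len : ℕ
  len_pos : 0 < len
  vtx : ℕ → V
  first : vtx 0 = a
  last : vtx len = b
  inj : ∀ i j, i ≤ len → j ≤ len → vtx i = vtx j → i = j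
  adj : ∀ i, i < len → E (vtx i) (vtx (i + 1)) ∨ E (vtx (i + 1)) (vtx i)

namespace GPath

variable {E : V → V → Prop} {a b : V}

/-- The interior vertex at position `i` is a collider on the path. -/
def IsColliderAt (p : GPath E a b) (i : ℕ) : Prop :=
  0 < i ∧ i < p.len ∧ E (p.vtx (i - 1)) (p.vtx i) ∧ E (p.vtx (i + 1)) (p.vtx i)

/-- A path is open given `S` if no non-collider on it lies in `S` and every collider
on it has a descendant in `S`. -/
def OpenGiven (p : GPath E a b) (S : Set V) : Prop :=
  (∀ i, 0 < i → i < p.len → ¬ p.IsColliderAt i → p.vtx i ∉ S) ∧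
  (∀ i, p.IsColliderAt i → ∃ d ∈ S, Anc E (p.vtx i) d)

/-- A back-door path: the first edge points into the first vertex. -/
def IsBackdoor (p : GPath E a b) : Prop := E (p.vtx 1) (p.vtx 0)

/-- A causal (directed) path. -/
def Causal (p : GPath E a b) : Prop := ∀ i, i < p.len → E (p.vtx i) (p.vtx (i + 1))

/-- A path is proper with respect to `X` if only its first vertex lies in `X`. -/
def ProperFrom (p : GPath E a b) (X : Set V) : Prop :=
  ∀ i, 0 < i → i ≤ p.len → p.vtx i ∉ X

/-- The vertex `w` lies on the path. -/
def MemV (p : GPath E a b) (w : V) : Prop := ∃ i ≤ p.len, p.vtx i = w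

/-- The number of colliders on the path. -/
noncomputable def numColliders (p : GPath E a b) : ℕ := Set.ncard {i | p.IsColliderAt i}

end GPath

/-- `A` and `B` are d-separated given `S`: every path from `A` to `B` is blocked given `S`. -/
def DSep (E : V → V → Prop) (A B S : Set V) : Prop :=
  ∀ a ∈ A, ∀ b ∈ B, ∀ p : GPath E a b, ¬ p.OpenGiven S

/-- `A` and `B` are d-connected given `S`: some path from `A` to `B` is open given `S`. -/
def DConn (E : V → V → Prop) (A B S : Set V) : Prop :=
  ∃ a ∈ A, ∃ b ∈ B, ∃ p : GPath E a b, p.OpenGiven S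

/-- The set of descendants of a vertex set `S`. -/
def descendants (E : V → V → Prop) (S : Set V) : Set V := {d | ∃ s ∈ S, Anc E s d}

/-- `S` blocks every back-door path from `x` to `y`. -/
def BlocksBackdoor (E : V → V → Prop) (x y : V) (S : Set V) : Prop :=
  ∀ p : GPath E x y, p.IsBackdoor → ¬ p.OpenGiven S

/-- The back-door criterion for `Z` relative to `(X, Y)`. -/
def BackdoorCriterion (E : V → V → Prop) (X Y Z : Set V) : Prop :=
  Z ∩ descendants E X = ∅ ∧
  ∀ x ∈ X, ∀ y ∈ Y, BlocksBackdoor E x y (Z ∪ (X \ {x}))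

/-- The adjustment criterion for `Z` relative to `(X, Y)`: (a) `Z` contains no
descendant of any `w ∉ X` lying on a proper causal path from `X` to `Y`, and
(b) `Z` blocks every proper non-causal path from `X` to `Y`. -/
def AdjustmentCriterion (E : V → V → Prop) (X Y Z : Set V) : Prop :=
  (∀ w, w ∉ X →
      (∃ x ∈ X, ∃ y ∈ Y, ∃ p : GPath E x y, p.ProperFrom X ∧ p.Causal ∧ p.MemV w) →
      ∀ z ∈ Z, ¬ Anc E w z) ∧
  (∀ x ∈ X, ∀ y ∈ Y, ∀ p : GPath E x y, p.ProperFrom X → ¬ p.Causal → ¬ p.OpenGiven Z)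

open Relation

section Chains

variable {E : V → V → Prop}

theorem transGen_of_chain {f : ℕ → V} {m : ℕ} (hf : ∀ t < m, E (f t) (f (t + 1)))
    {i j : ℕ} (hij : i < j) (hj : j ≤ m) : TransGen E (f i) (f j) := by
  induction j, hij using Nat.le_induction with
  | base => exact .single (hf i (by omega))
  | succ j hij ih => exact (ih (by omega)).tail (hf j (by omega))

theorem not_edge_of_edge (hdag : Irreflexive (TransGen E)) {u v : V} (h : E u v) : ¬ E v u :=
  fun h' => hdag u ((TransGen.single h).tail h')

end Chains

namespace GPath

variable {E : V → V → Prop} {a b : V} {S : Set V}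

theorem vtx_ne_first (p : GPath E a b) {i : ℕ} (hi : 0 < i) (hil : i ≤ p.len) : p.vtx i ≠ a :=
  fun h => hi.ne' (p.inj i 0 hil (Nat.zero_le _) (h.trans p.first.symm))

theorem properFrom_singleton_first (p : GPath E a b) : p.ProperFrom {a} :=
  fun _ hi hil => p.vtx_ne_first hi hil

theorem OpenGiven.of_forall {p : GPath E a b}
    (h : ∀ i, 0 < i → i < p.len → (¬ p.IsColliderAt i → p.vtx i ∉ S) ∧
      (p.IsColliderAt i → ∃ d ∈ S, Anc E (p.vtx i) d)) : p.OpenGiven S :=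
  ⟨fun i hi hil => (h i hi hil).1, fun i hc => (h i hc.1 hc.2.1).2 hc⟩

theorem Causal.transGen {p : GPath E a b} (hp : p.Causal) {i j : ℕ} (hij : i < j)
    (hj : j ≤ p.len) : TransGen E (p.vtx i) (p.vtx j) :=
  transGen_of_chain hp hij hj

theorem Causal.anc {p : GPath E a b} (hp : p.Causal) {i j : ℕ} (hij : i ≤ j)
    (hj : j ≤ p.len) : Anc E (p.vtx i) (p.vtx j) := by
  rcases hij.lt_or_eq with hij | rfl
  · exact (hp.transGen hij hj).to_reflTransGen
  · exact .refl

theorem Causal.not_isColliderAt (hdag : Irreflexive (TransGen E)) {p : GPath E a b}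
    (hp : p.Causal) (i : ℕ) : ¬ p.IsColliderAt i :=
  fun h => not_edge_of_edge hdag (hp i h.2.1) h.2.2.2

theorem Causal.edge_first {p : GPath E a b} (hp : p.Causal) : E a (p.vtx 1) := by
  simpa [p.first] using hp 0 p.len_pos

theorem Causal.edge_last {p : GPath E a b} (hp : p.Causal) : E (p.vtx (p.len - 1)) b := by
  simpa [Nat.sub_add_cancel p.len_pos, p.last] using hp (p.len - 1) (by have := p.len_pos; omega)

theorem exists_causal_of_transGen (hdag : Irreflexive (TransGen E)) {u v : V}
    (h : TransGen E u v) : ∃ p : GPath E u v, p.Causal := by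
  obtain ⟨m, f, hm, hf0, hfm, hf⟩ : ∃ m, ∃ f : ℕ → V,
      0 < m ∧ f 0 = u ∧ f m = v ∧ ∀ t < m, E (f t) (f (t + 1)) := by
    induction h with
    | single h => exact ⟨1, fun t => if t = 0 then u else _, one_pos, rfl, rfl, by simpa⟩
    | @tail w x _ hwx ih =>
      obtain ⟨m, f, hm, hf0, hfm, hf⟩ := ih
      refine ⟨m + 1, fun t => if t ≤ m then f t else x, by omega, by simp [hf0], by simp, ?_⟩
      intro t ht
      rcases Nat.lt_or_ge t m with h | h
      · simpa [h.le, Nat.succ_le_of_lt h] using hf t h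
      · obtain rfl : t = m := by omega
        simpa [hfm] using hwx
  have hinj : ∀ i j, i ≤ m → j ≤ m → f i = f j → i = j := by
    intro i j hi hj hij
    by_contra hne
    rcases Nat.lt_or_gt_of_ne hne with h | h
    · exact hdag _ (hij ▸ transGen_of_chain hf h hj)
    · exact hdag _ (hij ▸ transGen_of_chain hf h hi)
  exact ⟨⟨m, hm, f, hf0, hfm, hinj, fun t ht => .inl (hf t ht)⟩, hf⟩

theorem Causal.openGiven (hdag : Irreflexive (TransGen E)) {p : GPath E a b} (hp : p.Causal)
    (hS : ∀ j, 0 < j → j < p.len → p.vtx j ∉ S) : p.OpenGiven S :=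
  .of_forall fun j hj hjl =>
    ⟨fun _ => hS j hj hjl, fun h => absurd h (hp.not_isColliderAt hdag j)⟩

theorem not_causal_of_edge (hdag : Irreflexive (TransGen E)) {p : GPath E a b}
    (h : E (p.vtx 1) a) : ¬ p.Causal :=
  fun hp => not_edge_of_edge hdag hp.edge_first h

def rev (p : GPath E a b) : GPath E b a where
  len := p.len
  len_pos := p.len_pos
  vtx j := p.vtx (p.len - j)
  first := by simpa using p.last
  last := by simpa using p.first
  inj i j hi hj h := by have := p.inj _ _ (Nat.sub_le _ _) (Nat.sub_le _ _) h; omega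
  adj i hi := by
    have h1 : p.len - (i + 1) + 1 = p.len - i := by omega
    rcases p.adj (p.len - (i + 1)) (by omega) with h | h
    · exact .inr (h1 ▸ h)
    · exact .inl (h1 ▸ h)

@[simp] theorem rev_len (p : GPath E a b) : p.rev.len = p.len := rfl

theorem rev_vtx (p : GPath E a b) (i : ℕ) : p.rev.vtx i = p.vtx (p.len - i) := rfl

theorem isColliderAt_rev (p : GPath E a b) (i : ℕ) :
    p.rev.IsColliderAt i ↔ p.IsColliderAt (p.len - i) := by
  simp only [IsColliderAt, rev_len, rev_vtx]
  constructor
  · rintro ⟨h1, h2, h3, h4⟩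
    rw [show p.len - (i + 1) = p.len - i - 1 by omega] at h4
    rw [show p.len - (i - 1) = p.len - i + 1 by omega] at h3
    exact ⟨by omega, by omega, h4, h3⟩
  · rintro ⟨h1, h2, h3, h4⟩
    refine ⟨by omega, by omega, ?_, ?_⟩
    · rwa [show p.len - (i - 1) = p.len - i + 1 by omega]
    · rwa [show p.len - (i + 1) = p.len - i - 1 by omega]

theorem numColliders_rev (p : GPath E a b) : p.rev.numColliders = p.numColliders := by
  have himage : (p.len - ·) '' {i | p.rev.IsColliderAt i} = {i | p.IsColliderAt i} := by
    ext j
    refine ⟨fun ⟨i, hi, hij⟩ => hij ▸ (p.isColliderAt_rev i).1 hi,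
      fun hj => ⟨p.len - j, ?_, ?_⟩⟩
    · show p.rev.IsColliderAt (p.len - j)
      rwa [isColliderAt_rev, Nat.sub_sub_self hj.2.1.le]
    · exact Nat.sub_sub_self hj.2.1.le
  rw [numColliders, numColliders, ← himage, Set.InjOn.ncard_image]
  intro i hi j hj (h : p.len - i = p.len - j)
  have : i < p.len := hi.2.1
  have : j < p.len := hj.2.1
  omega

theorem OpenGiven.rev {p : GPath E a b} (h : p.OpenGiven S) : p.rev.OpenGiven S :=
  .of_forall fun i hi hil => by
    simp only [rev_len, rev_vtx, isColliderAt_rev] at hil ⊢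
    exact ⟨h.1 _ (by omega) (by omega), h.2 _⟩

def take (p : GPath E a b) (i : ℕ) (hi : 0 < i) (hil : i ≤ p.len) : GPath E a (p.vtx i) where
  len := i
  len_pos := hi
  vtx := p.vtx
  first := p.first
  last := rfl
  inj x y hx hy := p.inj x y (hx.trans hil) (hy.trans hil)
  adj x hx := p.adj x (hx.trans_le hil)

theorem isColliderAt_take (p : GPath E a b) {i : ℕ} (hi : 0 < i) (hil : i ≤ p.len) (j : ℕ) :
    (p.take i hi hil).IsColliderAt j ↔ j < i ∧ p.IsColliderAt j :=
  ⟨fun ⟨h1, h2, h3, h4⟩ => ⟨h2, h1, h2.trans_le hil, h3, h4⟩,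
    fun ⟨h, h1, _, h3, h4⟩ => ⟨h1, h, h3, h4⟩⟩

theorem OpenGiven.take {p : GPath E a b} (h : p.OpenGiven S) {i : ℕ} (hi : 0 < i)
    (hil : i ≤ p.len) : (p.take i hi hil).OpenGiven S :=
  .of_forall fun j hj (hji : j < i) => by
    simp only [isColliderAt_take, hji, true_and]
    exact ⟨h.1 j hj (hji.trans_le hil), h.2 j⟩

def drop (p : GPath E a b) (i : ℕ) (hi : i < p.len) : GPath E (p.vtx i) b where
  len := p.len - i
  len_pos := Nat.sub_pos_of_lt hi
  vtx j := p.vtx (i + j)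
  first := rfl
  last := by rw [Nat.add_sub_cancel' hi.le, p.last]
  inj x y hx hy h := by have := p.inj _ _ (by omega) (by omega) h; omega
  adj x hx := p.adj (i + x) (by omega)

theorem isColliderAt_drop (p : GPath E a b) {i : ℕ} (hi : i < p.len) (j : ℕ) :
    (p.drop i hi).IsColliderAt j ↔ 0 < j ∧ p.IsColliderAt (i + j) := by
  simp only [IsColliderAt, drop]
  constructor
  · rintro ⟨h1, h2, h3, h4⟩
    rw [show i + (j - 1) = i + j - 1 by omega] at h3
    exact ⟨h1, by omega, by omega, h3, h4⟩
  · rintro ⟨h1, -, h2, h3, h4⟩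
    rw [show i + j - 1 = i + (j - 1) by omega] at h3
    exact ⟨h1, by omega, h3, h4⟩

theorem OpenGiven.drop {p : GPath E a b} (h : p.OpenGiven S) {i : ℕ} (hi : i < p.len) :
    (p.drop i hi).OpenGiven S :=
  .of_forall fun j hj (hjl : j < p.len - i) => by
    simp only [isColliderAt_drop, hj, true_and]
    exact ⟨h.1 (i + j) (by omega) (by omega), h.2 (i + j)⟩

section Append

variable {c : V}

def append (p : GPath E a b) (p' : GPath E b c)
    (h : ∀ i ≤ p.len, ∀ j ≤ p'.len, p.vtx i = p'.vtx j → j = 0) : GPath E a c where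
  len := p.len + p'.len
  len_pos := Nat.add_pos_left p.len_pos _
  vtx n := if n ≤ p.len then p.vtx n else p'.vtx (n - p.len)
  first := by simp [p.first]
  last := by simp [p'.len_pos.ne', p'.last]
  inj x y hx hy hxy := by
    split_ifs at hxy with h1 h2 h2
    · exact p.inj x y h1 h2 hxy
    · have := h x h1 _ (by omega) hxy; omega
    · have := h y h2 _ (by omega) hxy.symm; omega
    · have := p'.inj _ _ (by omega) (by omega) hxy; omega
  adj n hn := by
    have hjoin : p.vtx p.len = p'.vtx 0 := p.last.trans p'.first.symm
    by_cases h1 : n + 1 ≤ p.len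
    · simpa [h1, Nat.le_of_succ_le h1] using p.adj n h1
    · have h2 := p'.adj (n - p.len) (by omega)
      rw [show n - p.len + 1 = n + 1 - p.len by omega] at h2
      by_cases h3 : n = p.len
      · subst h3; simpa [hjoin] using h2
      · simpa [h1, show ¬ n ≤ p.len by omega] using h2

variable {p : GPath E a b} {p' : GPath E b c}
  {h : ∀ i ≤ p.len, ∀ j ≤ p'.len, p.vtx i = p'.vtx j → j = 0}

@[simp] theorem append_len : (p.append p' h).len = p.len + p'.len := rfl

theorem append_vtx_of_le {n : ℕ} (hn : n ≤ p.len) : (p.append p' h).vtx n = p.vtx n := if_pos hn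

theorem append_vtx_add (j : ℕ) : (p.append p' h).vtx (p.len + j) = p'.vtx j := by
  rcases Nat.eq_zero_or_pos j with rfl | hj
  · exact (append_vtx_of_le le_rfl).trans (p.last.trans p'.first.symm)
  · exact (if_neg (by omega)).trans (by rw [Nat.add_sub_cancel_left])

theorem isColliderAt_append_of_lt {j : ℕ} (hj : j < p.len) :
    (p.append p' h).IsColliderAt j ↔ p.IsColliderAt j := by
  simp only [IsColliderAt, append_len, append_vtx_of_le (by omega : j - 1 ≤ p.len),
    append_vtx_of_le hj.le, append_vtx_of_le (hj : j + 1 ≤ p.len)]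
  constructor
  · rintro ⟨h1, -, h3, h4⟩; exact ⟨h1, hj, h3, h4⟩
  · rintro ⟨h1, -, h3, h4⟩; exact ⟨h1, by omega, h3, h4⟩

theorem isColliderAt_append_len :
    (p.append p' h).IsColliderAt p.len ↔ E (p.vtx (p.len - 1)) b ∧ E (p'.vtx 1) b := by
  have := p'.len_pos
  simp only [IsColliderAt, append_len, append_vtx_of_le (Nat.sub_le p.len 1),
    append_vtx_of_le le_rfl, append_vtx_add, p.last, p.len_pos, true_and]
  exact ⟨fun ⟨_, h3, h4⟩ => ⟨h3, h4⟩, fun ⟨h3, h4⟩ => ⟨by omega, h3, h4⟩⟩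

theorem isColliderAt_append_add {j : ℕ} (hj : 0 < j) :
    (p.append p' h).IsColliderAt (p.len + j) ↔ p'.IsColliderAt j := by
  simp only [IsColliderAt, append_len, show p.len + j - 1 = p.len + (j - 1) by omega,
    show p.len + j + 1 = p.len + (j + 1) by omega, append_vtx_add]
  exact ⟨fun ⟨_, h2, h3, h4⟩ => ⟨hj, by omega, h3, h4⟩,
    fun ⟨_, h2, h3, h4⟩ => ⟨by omega, by omega, h3, h4⟩⟩

theorem OpenGiven.append (hp : p.OpenGiven S) (hp' : p'.OpenGiven S)
    (hcol : (p.append p' h).IsColliderAt p.len → ∃ d ∈ S, Anc E b d)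
    (hncol : ¬ (p.append p' h).IsColliderAt p.len → b ∉ S) : (p.append p' h).OpenGiven S := by
  refine .of_forall fun n hn hnl => ?_
  rcases lt_trichotomy n p.len with hlt | rfl | hgt
  · rw [isColliderAt_append_of_lt hlt, append_vtx_of_le hlt.le]
    exact ⟨hp.1 n hn hlt, hp.2 n⟩
  · rw [append_vtx_of_le le_rfl, p.last]
    exact ⟨hncol, hcol⟩
  · obtain ⟨j, rfl⟩ := Nat.exists_eq_add_of_lt hgt
    rw [Nat.add_assoc, isColliderAt_append_add (Nat.succ_pos j), append_vtx_add]
    exact ⟨hp'.1 _ (Nat.succ_pos j) (by simp only [append_len] at hnl; omega), hp'.2 _⟩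

end Append

theorem exists_isColliderAt_of_not_transGen (p : GPath E a b) {i k : ℕ} (hik : i < k)
    (hk : k ≤ p.len) (hE : E (p.vtx k) (p.vtx (k - 1)))
    (hn : ¬ TransGen E (p.vtx k) (p.vtx i)) : ∃ j, i < j ∧ j < k ∧ p.IsColliderAt j := by
  induction k, hik using Nat.le_induction with
  | base => exact absurd (.single hE) hn
  | succ k hik ih =>
    have hk1 : k - 1 + 1 = k := by omega
    rcases p.adj (k - 1) (by omega) with h | h
    · exact ⟨k, hik, k.lt_succ_self, by omega, by omega, hk1 ▸ h, hE⟩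
    · obtain ⟨j, hij, hjk, hj⟩ := ih (by omega) (hk1 ▸ h) fun ht => hn (.head hE ht)
      exact ⟨j, hij, by omega, hj⟩

-- Otherwise the edges between `i` and `k` all point towards `i`, closing a cycle with `hT`.
theorem exists_isColliderAt_of_transGen_of_edge (hdag : Irreflexive (TransGen E))
    (p : GPath E a b) {i k : ℕ} (hik : i < k) (hk : k < p.len)
    (hT : TransGen E (p.vtx i) (p.vtx k)) (hE : E (p.vtx (k + 1)) (p.vtx k)) :
    ∃ l, i < l ∧ l ≤ k ∧ p.IsColliderAt l := by
  by_cases hkc : p.IsColliderAt k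
  · exact ⟨k, hik, le_rfl, hkc⟩
  have hk1 : k - 1 + 1 = k := by omega
  rcases p.adj (k - 1) (by omega) with h | h
  · exact absurd ⟨by omega, hk, hk1 ▸ h, hE⟩ hkc
  · obtain ⟨l, hil, hlk, hl⟩ := p.exists_isColliderAt_of_not_transGen hik hk.le (hk1 ▸ h)
      fun h' => hdag _ (hT.trans h')
    exact ⟨l, hil, hlk.le, hl⟩

/- For `p'` obtained from `p` by replacing the stretch between the collider `i` and position `k`
by a detour that rejoins `p` at position `J` of `p'`: the colliders of `p'` inject into those of
`p` other than `i`. -/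
theorem numColliders_lt_of_isColliderAt_imp {a' b' : V} {p : GPath E a b} {p' : GPath E a' b'}
    {i k J : ℕ} (hi : p.IsColliderAt i) (hik : i < k) (hiJ : i ≤ J)
    (h : ∀ j, p'.IsColliderAt j → (j < i ∧ p.IsColliderAt j) ∨
      (j = J ∧ ∃ l, i < l ∧ l ≤ k ∧ p.IsColliderAt l) ∨
      (J < j ∧ p.IsColliderAt (k + (j - J)))) :
    p'.numColliders < p.numColliders := by
  classical
  have hfin : {j | p.IsColliderAt j}.Finite := (Set.finite_Iio p.len).subset fun j hj => hj.2.1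
  obtain ⟨l, hl⟩ : ∃ l, (∃ l, i < l ∧ l ≤ k ∧ p.IsColliderAt l) →
      i < l ∧ l ≤ k ∧ p.IsColliderAt l := by
    by_cases hex : ∃ l, i < l ∧ l ≤ k ∧ p.IsColliderAt l
    · exact ⟨hex.choose, fun _ => hex.choose_spec⟩
    · exact ⟨0, fun h => absurd h hex⟩
  set φ : ℕ → ℕ := fun j => if j < i then j else if j = J then l else k + (j - J)
  have hφ : ∀ j, p'.IsColliderAt j → p.IsColliderAt (φ j) ∧
      ((j < i ∧ φ j = j) ∨ (j = J ∧ i < φ j ∧ φ j ≤ k) ∨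
        (J < j ∧ φ j = k + (j - J))) := by
    intro j hj
    rcases h j hj with ⟨hji, hpj⟩ | ⟨rfl, hex⟩ | ⟨hJj, hpj⟩
    · have hφj : φ j = j := if_pos hji
      rw [hφj]; exact ⟨hpj, .inl ⟨hji, rfl⟩⟩
    · obtain ⟨h1, h2, h3⟩ := hl hex
      have hφj : φ j = l := (if_neg (not_lt.2 hiJ)).trans (if_pos rfl)
      rw [hφj]; exact ⟨h3, .inr (.inl ⟨rfl, h1, h2⟩)⟩
    · have hφj : φ j = k + (j - J) := (if_neg (by omega)).trans (if_neg hJj.ne')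
      rw [hφj]; exact ⟨hpj, .inr (.inr ⟨hJj, rfl⟩)⟩
  calc p'.numColliders ≤ ({j | p.IsColliderAt j} \ {i}).ncard := by
        refine Set.ncard_le_ncard_of_injOn φ (fun j hj => ⟨(hφ j hj).1, ?_⟩) ?_ hfin.sdiff
        · rcases (hφ j hj).2 with h | h | h <;> simp only [Set.mem_singleton_iff] <;> omega
        · intro x hx y hy hxy
          rcases (hφ x hx).2 with h1 | h1 | h1 <;> rcases (hφ y hy).2 with h2 | h2 | h2 <;> omega
    _ < p.numColliders := Set.ncard_sdiff_singleton_lt_of_mem hi hfin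

theorem exists_last_isColliderAt_not_anc (p : GPath E a b) (S : Set V) {i : ℕ}
    (hi : p.IsColliderAt i) (hiS : ¬ ∃ d ∈ S, Anc E (p.vtx i) d) :
    ∃ i₀, p.IsColliderAt i₀ ∧ (¬ ∃ d ∈ S, Anc E (p.vtx i₀) d) ∧
      ∀ j, i₀ < j → p.IsColliderAt j → ∃ d ∈ S, Anc E (p.vtx j) d := by
  classical
  let Bad j := p.IsColliderAt j ∧ ¬ ∃ d ∈ S, Anc E (p.vtx j) d
  obtain ⟨hc, hcS⟩ : Bad (Nat.findGreatest Bad p.len) :=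
    Nat.findGreatest_spec hi.2.1.le ⟨hi, hiS⟩
  exact ⟨_, hc, hcS, fun j hj hjc => by_contra fun h =>
    (Nat.le_findGreatest hjc.2.1.le ⟨hjc, h⟩).not_gt hj⟩

theorem isColliderAt_take_append_of_causal (hdag : Irreflexive (TransGen E)) {B : GPath E a b}
    {i : ℕ} (hi : 0 < i) (hil : i ≤ B.len) {w : V} {c : GPath E (B.vtx i) w} (hc : c.Causal)
    {h : ∀ n ≤ (B.take i hi hil).len, ∀ j ≤ c.len,
      (B.take i hi hil).vtx n = c.vtx j → j = 0}
    {j : ℕ} (hj : ((B.take i hi hil).append c h).IsColliderAt j) :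
    j < i ∧ B.IsColliderAt j := by
  rcases lt_trichotomy j i with hlt | rfl | hgt
  · exact (B.isColliderAt_take hi hil j).1 ((isColliderAt_append_of_lt hlt).1 hj)
  · exact absurd (isColliderAt_append_len.1 hj).2 (not_edge_of_edge hdag hc.edge_first)
  · obtain ⟨m, rfl⟩ := Nat.exists_eq_add_of_lt hgt
    rw [Nat.add_assoc] at hj
    exact absurd ((isColliderAt_append_add (Nat.succ_pos m)).1 hj) (hc.not_isColliderAt hdag _)

theorem take_append_vtx_eq_vtx {B : GPath E a b} {i : ℕ} {hi : 0 < i} {hil : i ≤ B.len} {w : V}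
    {c : GPath E (B.vtx i) w}
    {h : ∀ n ≤ (B.take i hi hil).len, ∀ j ≤ c.len,
      (B.take i hi hil).vtx n = c.vtx j → j = 0}
    (hcB : ∀ j, 0 < j → j < c.len → ∀ l ≤ B.len, c.vtx j ≠ B.vtx l) {n l : ℕ}
    (hn : n ≤ i + c.len) (hl : l ≤ B.len)
    (hnl : ((B.take i hi hil).append c h).vtx n = B.vtx l) :
    (n ≤ i ∧ l = n) ∨ (n = i + c.len ∧ B.vtx l = c.vtx c.len) := by
  rcases Nat.lt_or_ge i n with hin | hin
  · obtain ⟨m, rfl⟩ := Nat.exists_eq_add_of_lt hin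
    have hPm : ((B.take i hi hil).append c h).vtx (i + (m + 1)) = c.vtx (m + 1) := append_vtx_add _
    rw [Nat.add_assoc, hPm] at hnl
    rcases (show m + 1 ≤ c.len by omega).lt_or_eq with hm | hm
    · exact absurd hnl (hcB _ (Nat.succ_pos m) hm _ hl)
    · exact .inr ⟨by omega, hm ▸ hnl.symm⟩
  · have hPn : ((B.take i hi hil).append c h).vtx n = B.vtx n := append_vtx_of_le hin
    exact .inl ⟨hin, B.inj _ _ hl (by omega) (hnl.symm.trans hPn)⟩

theorem exists_numColliders_lt_of_append_drop (hdag : Irreflexive (TransGen E))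
    (B : GPath E a b) (hB : B.OpenGiven S) {i k : ℕ} (hi : B.IsColliderAt i) (hik : i < k)
    (hk : k < B.len) (hTik : TransGen E (B.vtx i) (B.vtx k)) (hkS : ∃ d ∈ S, Anc E (B.vtx k) d)
    (P : GPath E a (B.vtx k)) (hP : P.OpenGiven S) (hiP : i ≤ P.len)
    (hPcol : ∀ j, P.IsColliderAt j → j < i ∧ B.IsColliderAt j)
    (hPlast : E (P.vtx (P.len - 1)) (B.vtx k))
    (hPB : ∀ n ≤ P.len, ∀ j ≤ (B.drop k hk).len, P.vtx n = (B.drop k hk).vtx j → j = 0) :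
    ∃ B' : GPath E a b, B'.OpenGiven S ∧ B'.numColliders < B.numColliders := by
  refine ⟨P.append (B.drop k hk) hPB, hP.append (hB.drop hk) (fun _ => hkS) fun hncol hkS => ?_,
    numColliders_lt_of_isColliderAt_imp hi hik hiP fun j hj => ?_⟩
  · have hnE : ¬ E (B.vtx (k + 1)) (B.vtx k) := fun hE =>
      hncol (isColliderAt_append_len.2 ⟨hPlast, hE⟩)
    exact hB.1 k (by omega) hk (fun hkc => hnE hkc.2.2.2) hkS
  rcases lt_trichotomy j P.len with hlt | rfl | hgt
  · exact .inl (hPcol j ((isColliderAt_append_of_lt hlt).1 hj))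
  · exact .inr (.inl ⟨rfl, B.exists_isColliderAt_of_transGen_of_edge hdag hik hk hTik
      (isColliderAt_append_len.1 hj).2⟩)
  · obtain ⟨m, rfl⟩ := Nat.exists_eq_add_of_lt hgt
    rw [Nat.add_assoc] at hj ⊢
    have := ((B.isColliderAt_drop hk _).1 ((isColliderAt_append_add (Nat.succ_pos m)).1 hj)).2
    exact .inr (.inr ⟨by omega, by rwa [Nat.add_sub_cancel_left]⟩)

theorem exists_numColliders_lt_of_shortcut_of_lt (hdag : Irreflexive (TransGen E))
    (B : GPath E a b) (hB : B.OpenGiven S) {i k : ℕ} (hi : B.IsColliderAt i) (hik : i < k)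
    (hk : k ≤ B.len) {u w : V} (c : GPath E u w) (hu : B.vtx i = u) (hw : B.vtx k = w)
    (hc : c.Causal) (hcB : ∀ j, 0 < j → j < c.len → ∀ l ≤ B.len, c.vtx j ≠ B.vtx l)
    (hcS : ∀ j < c.len, c.vtx j ∉ S) (hwS : ∃ d ∈ S, Anc E w d) :
    ∃ B' : GPath E a b, B'.OpenGiven S ∧ B'.numColliders < B.numColliders := by
  subst hu
  have hcw : c.vtx c.len = B.vtx k := c.last.trans hw.symm
  let P := (B.take i hi.1 hi.2.1.le).append c fun n (hn : n ≤ i) j hj hnj => by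
    rcases hj.lt_or_eq with hj | rfl
    · by_contra hj0
      exact hcB j (by omega) hj n (by omega) hnj.symm
    · have := B.inj n k (by omega) hk (hnj.trans hcw); omega
  have hPlen : P.len = i + c.len := rfl
  have hPcol : ∀ j, P.IsColliderAt j → j < i ∧ B.IsColliderAt j := fun j hj =>
    isColliderAt_take_append_of_causal hdag hi.1 hi.2.1.le hc hj
  have hP : P.OpenGiven S := (hB.take _ _).append (hc.openGiven hdag fun j _ hj => hcS j hj)
    (fun hcol => absurd (hPcol i hcol).1 (lt_irrefl i)) fun _ => c.first ▸ hcS 0 c.len_pos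
  rcases hk.lt_or_eq with hk | rfl
  · subst hw
    refine B.exists_numColliders_lt_of_append_drop hdag hB hi hik hk
      (by simpa [c.first, hcw] using hc.transGen c.len_pos le_rfl) hwS P hP (by omega) hPcol ?_
      fun n hn j (hj : j ≤ B.len - k) hnj => ?_
    · have : P.vtx (i + (c.len - 1)) = c.vtx (c.len - 1) := append_vtx_add _
      rw [show P.len - 1 = i + (c.len - 1) by have := c.len_pos; omega, this]
      exact hc.edge_last
    rcases take_append_vtx_eq_vtx hcB hn (by omega : k + j ≤ B.len) hnj with
      ⟨hni, hkn⟩ | ⟨-, hkw⟩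
    · omega
    · have := B.inj _ _ hk.le (by omega) (hcw.symm.trans hkw.symm); omega
  · obtain rfl : w = b := hw.symm.trans B.last
    exact ⟨P, hP, numColliders_lt_of_isColliderAt_imp hi hik le_rfl
      fun j hj => .inl (hPcol j hj)⟩

theorem exists_numColliders_lt_of_shortcut (hdag : Irreflexive (TransGen E))
    (B : GPath E a b) (hB : B.OpenGiven S) {i k : ℕ} (hi : B.IsColliderAt i) (hki : k ≠ i)
    (hk : k ≤ B.len) {u w : V} (c : GPath E u w) (hu : B.vtx i = u) (hw : B.vtx k = w)
    (hc : c.Causal) (hcB : ∀ j, 0 < j → j < c.len → ∀ l ≤ B.len, c.vtx j ≠ B.vtx l)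
    (hcS : ∀ j < c.len, c.vtx j ∉ S) (hwS : ∃ d ∈ S, Anc E w d) :
    ∃ B' : GPath E a b, B'.OpenGiven S ∧ B'.numColliders < B.numColliders := by
  rcases Nat.lt_or_gt_of_ne hki with hlt | hgt
  · have hil := hi.2.1
    obtain ⟨B', hB', hlt'⟩ := B.rev.exists_numColliders_lt_of_shortcut_of_lt hdag hB.rev
      ((B.isColliderAt_rev _).2 (by rwa [Nat.sub_sub_self hil.le]))
      (by omega : B.len - i < B.len - k) (Nat.sub_le _ _) c
      (by rwa [rev_vtx, Nat.sub_sub_self hil.le]) (by rwa [rev_vtx, Nat.sub_sub_self hk]) hc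
      (fun j hj hjl l _ => hcB j hj hjl _ (Nat.sub_le _ _)) hcS hwS
    exact ⟨B'.rev, hB'.rev, by rwa [numColliders_rev, ← B.numColliders_rev]⟩
  · exact B.exists_numColliders_lt_of_shortcut_of_lt hdag hB hi hgt hk c hu hw hc hcB hcS hwS

theorem exists_numColliders_lt_of_causal_meet (hdag : Irreflexive (TransGen E)) {x : V}
    (B : GPath E a b) (hB : B.OpenGiven (S ∪ {x})) {i : ℕ} (hi : B.IsColliderAt i)
    (c : GPath E (B.vtx i) x) (hc : c.Causal) (hcS : ∀ j ≤ c.len, c.vtx j ∉ S)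
    (hmeet : ∃ t, 0 < t ∧ t ≤ c.len ∧ ∃ l ≤ B.len, c.vtx t = B.vtx l) :
    ∃ B' : GPath E a b, B'.OpenGiven (S ∪ {x}) ∧ B'.numColliders < B.numColliders := by
  classical
  obtain ⟨ht0, htl, k, hk, hck⟩ := Nat.find_spec hmeet
  have hki : k ≠ i := by
    rintro rfl
    exact ht0.ne' (c.inj _ 0 htl (Nat.zero_le _) (hck.trans c.first.symm))
  have hcSx : ∀ j < Nat.find hmeet, c.vtx j ∉ S ∪ {x} := by
    rintro j hj (hjS | hjx)
    · exact hcS j (by omega) hjS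
    · exact absurd (c.inj j c.len (by omega) le_rfl (hjx.trans c.last.symm)) (by omega)
  refine B.exists_numColliders_lt_of_shortcut hdag hB hi hki hk (c.take _ ht0 htl) rfl hck.symm
    (fun j hj => hc j (hj.trans_le htl)) (fun j hj hjt l hl hjl => ?_) hcSx
    ⟨x, .inr rfl, by simpa [c.last] using hc.anc htl le_rfl⟩
  exact Nat.find_min hmeet hjt ⟨hj, by simp only [take] at hjt; omega, l, hl, hjl⟩

theorem exists_not_causal_openGiven_of_causal_disjoint (hdag : Irreflexive (TransGen E))
    (B : GPath E a b) {i : ℕ} (hi : i < B.len) (hs : (B.drop i hi).OpenGiven S) {x : V}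
    (c : GPath E (B.vtx i) x) (hc : c.Causal)
    (hmeet : ¬ ∃ t, 0 < t ∧ t ≤ c.len ∧ ∃ l ≤ B.len, c.vtx t = B.vtx l)
    (hcS : ∀ j < c.len, c.vtx j ∉ S) : ∃ r : GPath E x b, ¬ r.Causal ∧ r.OpenGiven S := by
  have hc1 : 1 ≤ c.len := c.len_pos
  let r := c.rev.append (B.drop i hi) fun n hn l (hl : l ≤ B.len - i) hnl => by
    have hn0 : c.len - n = 0 :=
      by_contra fun h => hmeet ⟨_, by omega, Nat.sub_le _ _, _, by omega, hnl⟩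
    have := B.inj (i + l) i (by omega) hi.le (hnl.symm.trans (by rw [rev_vtx, hn0, c.first]))
    omega
  have hr1 : r.vtx 1 = c.vtx (c.len - 1) := append_vtx_of_le hc1
  refine ⟨r, not_causal_of_edge hdag (hr1 ▸ hc.edge_last), ?_⟩
  refine (hc.openGiven hdag fun j _ hj => hcS j hj).rev.append hs (fun hcol => ?_)
    fun _ => c.first ▸ hcS 0 c.len_pos
  have := (isColliderAt_append_len.1 hcol).1
  rw [rev_len, rev_vtx, Nat.sub_sub_self hc1] at this
  exact absurd this (not_edge_of_edge hdag hc.edge_first)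

end GPath

theorem stmt_14_general (E : V → V → Prop)
    (hdag : Irreflexive (Relation.TransGen E))
    (X Y : V)
    (Z : Set V)
    (hadj : AdjustmentCriterion E {X} {Y} Z)
    (z0 : V)
    (q : GPath E z0 Y) (hq : q.OpenGiven ((Z \ {z0}) ∪ {X}))
    (hmin : ∀ q' : GPath E z0 Y, q'.OpenGiven ((Z \ {z0}) ∪ {X}) →
      q.numColliders ≤ q'.numColliders) :
    q.OpenGiven (Z \ {z0}) := by
  refine ⟨fun i hi hil hnc hmem => hq.1 i hi hil hnc (.inl hmem), fun i hi => ?_⟩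
  by_contra hbad
  obtain ⟨i0, hi0, hi0bad, hlater⟩ := q.exists_last_isColliderAt_not_anc _ hi hbad
  have hX : Anc E (q.vtx i0) X := by
    obtain ⟨d, hd | rfl, hanc⟩ := hq.2 i0 hi0
    exacts [absurd ⟨d, hd, hanc⟩ hi0bad, hanc]
  let s := q.drop i0 hi0.2.1
  have hs : s.OpenGiven Z := .of_forall fun j hj (hjl : j < q.len - i0) => by
    rw [GPath.isColliderAt_drop, and_iff_right hj]
    refine ⟨fun hnc hZ => hq.1 _ (by omega) (by omega) hnc (.inl ⟨hZ, ?_⟩), fun hc => ?_⟩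
    · exact q.vtx_ne_first (by omega) (by omega)
    · obtain ⟨d, hd, hanc⟩ := hlater _ (by omega) hc
      exact ⟨d, hd.1, hanc⟩
  rcases reflTransGen_iff_eq_or_transGen.1 hX with rfl | hX
  · exact hadj.2 _ rfl _ rfl s s.properFrom_singleton_first
      (GPath.not_causal_of_edge hdag hi0.2.2.2) hs
  obtain ⟨c, hc⟩ := GPath.exists_causal_of_transGen hdag hX
  have hcdesc : ∀ j ≤ c.len, c.vtx j ∉ Z \ {z0} := fun j hj hjZ =>
    hi0bad ⟨_, hjZ, by simpa [c.first] using hc.anc (Nat.zero_le j) hj⟩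
  by_cases hmeet : ∃ t, 0 < t ∧ t ≤ c.len ∧ ∃ l ≤ q.len, c.vtx t = q.vtx l
  · obtain ⟨q', hq', hlt⟩ :=
      q.exists_numColliders_lt_of_causal_meet hdag hq hi0 c hc hcdesc hmeet
    exact (hmin q' hq').not_gt hlt
  have hcZ : ∀ j < c.len, c.vtx j ∉ Z := fun j hj hjZ => hcdesc j hj.le ⟨hjZ, fun hjz => by
    rcases Nat.eq_zero_or_pos j with rfl | hj0
    · exact q.vtx_ne_first hi0.1 hi0.2.1.le (c.first.symm.trans hjz)
    · exact hmeet ⟨j, hj0, hj.le, 0, Nat.zero_le _, hjz.trans q.first.symm⟩⟩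
  obtain ⟨r, hrc, hro⟩ :=
    q.exists_not_causal_openGiven_of_causal_disjoint hdag hi0.2.1 hs c hc hmeet hcZ
  exact hadj.2 _ rfl _ rfl r r.properFrom_singleton_first hrc hro

/-- If `Z` satisfies the adjustment criterion relative to `({X}, {Y})`, `X` is not an
ancestor of any vertex of `Z`, `z₀ ∈ Z`, and `q` is a path from `z₀` to `Y` that is open
given `(Z \ {z₀}) ∪ {X}` with the fewest colliders among all such paths, then `q` is
open given `Z \ {z₀}`. -/
theorem stmt_14 [Fintype V] (E : V → V → Prop)
    (hdag : Irreflexive (Relation.TransGen E))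
    (X Y : V) (hXY : X ≠ Y)
    (Z : Set V) (hZsub : Z ⊆ ({X, Y} : Set V)ᶜ)
    (hadj : AdjustmentCriterion E {X} {Y} Z)
    (hanc : ∀ z ∈ Z, ¬ Anc E X z)
    (z0 : V) (hz0 : z0 ∈ Z)
    (q : GPath E z0 Y) (hq : q.OpenGiven ((Z \ {z0}) ∪ {X}))
    (hmin : ∀ q' : GPath E z0 Y, q'.OpenGiven ((Z \ {z0}) ∪ {X}) →
      q.numColliders ≤ q'.numColliders) :
    q.OpenGiven (Z \ {z0}) :=
  stmt_14_general E hdag X Y Z hadj z0 q hq hmin
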